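/- Let σ = ReLU, i.e. σ(x) = max{x, 0} on ℝ, and let d ≥ 1. Then for every compact set K ⊆ ℝ^d, every continuous function f : K → ℝ, and every ε > 0, there exist a depth L and a residual network g ∈ R_{L,σ}(d+2, 2, 2, …, 2) (input-state width d+2 and all residual block widths equal to 2) such that sup_{x ∈ K} |f(x) − g(x)| ≤ ε. -/

import Mathlib

open scoped BigOperators

/-- Residual blocks of a ResNet over `ℝ` with internal width `d0` and block widths `Ds`. -/
def ResBlocks (σ : ℝ → ℝ) (d0 : ℕ) : List ℕ → Set ((Fin d0 → ℝ) → (Fin d0 → ℝ))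
  | [] => {f | f = id}
  | D :: Ds =>
    {f | ∃ (A : Matrix (Fin d0) (Fin D) ℝ) (W : Matrix (Fin D) (Fin d0) ℝ) (b : Fin D → ℝ),
         ∃ g ∈ ResBlocks σ d0 Ds,
         f = fun z => g (z + A.mulVec fun i => σ (W.mulVec z i + b i))}

/-- The class `R_{L,σ}(d0, D_1, …, D_{L-1})` of functions `ℝ^d → ℝ` computed by residual
networks, where `Ds = [D_1, …, D_{L-1}]`. -/
def ResNet (σ : ℝ → ℝ) (d d0 : ℕ) (Ds : List ℕ) : Set ((Fin d → ℝ) → ℝ) :=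
  {f | ∃ (A0 : Matrix (Fin d0) (Fin d) ℝ) (b0 : Fin d0 → ℝ) (AL : Fin d0 → ℝ),
       ∃ h ∈ ResBlocks σ d0 Ds,
       f = fun z => ∑ i, AL i * h (A0.mulVec z + b0) i}

/-!
The max–min combinations of affine functions form a lattice that contains the affine functions,
so their restrictions to `K` separate points strongly and, by the lattice form of the
Stone–Weierstrass theorem, are uniformly dense in `C(K, ℝ)`. By distributivity each of them is a
finite max of finite mins of affine functions, and such a function is computed by width-2 ReLU
blocks acting on the state `(x, y₀, y₁) ∈ ℝ^(d+2)`: one block can overwrite a register `yₖ` by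
an affine function `ℓ` of the state, or by `min yₖ ℓ` or `max yₖ ℓ`, because
`t = relu t - relu (-t)`, `min a b = a - relu (a - b)` and `max a b = a + relu (b - a)`.
Each min is accumulated in `y₀` and the running max in `y₁`.
-/

open Matrix Function

local notation "relu" => fun x : ℝ => max x 0

@[elab_as_elim]
theorem infClosure_induction {α : Type*} [SemilatticeInf α] {s : Set α} {p : α → Prop}
    (mem : ∀ a ∈ s, p a) (inf : ∀ a ∈ s, ∀ b, p b → p (a ⊓ b)) {b : α}
    (hb : b ∈ infClosure s) : p b := by
  obtain ⟨t, ht, hts, rfl⟩ := hb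
  induction ht using Finset.Nonempty.cons_induction with
  | singleton a => simpa using mem a (hts (by simp))
  | cons a t hat ht ih =>
    rw [Finset.inf'_cons ht]
    exact inf a (hts (by simp)) _ (ih fun x hx => hts (by simp [hx]))

@[elab_as_elim]
theorem supClosure_induction {α : Type*} [SemilatticeSup α] {s : Set α} {p : α → Prop}
    (mem : ∀ a ∈ s, p a) (sup : ∀ a ∈ s, ∀ b, p b → p (a ⊔ b)) {b : α}
    (hb : b ∈ supClosure s) : p b := by
  obtain ⟨t, ht, hts, rfl⟩ := hb
  induction ht using Finset.Nonempty.cons_induction with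
  | singleton a => simpa using mem a (hts (by simp))
  | cons a t hat ht ih =>
    rw [Finset.sup'_cons ht]
    exact sup a (hts (by simp)) _ (ih fun x hx => hts (by simp [hx]))

theorem Fin.update_append_natAdd {α : Type*} {m n : ℕ} (x : Fin m → α) (y : Fin n → α)
    (k : Fin n) (t : α) :
    update (Fin.append x y) (Fin.natAdd m k) t = Fin.append x (update y k t) := by
  funext i
  refine Fin.addCases (fun i => ?_) (fun i => ?_) i
  · simp only [update_apply, Fin.ext_iff, Fin.val_castAdd, Fin.val_natAdd, Fin.append_left,
      ite_eq_right_iff]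
    omega
  · simp [update_apply, Fin.append_right]

theorem Fin.append_dotProduct_append {m n : ℕ} (w x : Fin m → ℝ) (e y : Fin n → ℝ) :
    Fin.append w e ⬝ᵥ Fin.append x y = w ⬝ᵥ x + e ⬝ᵥ y := by
  simp [dotProduct, Fin.sum_univ_add]

theorem Matrix.of_append_mulVec {m n p : ℕ} (A : Matrix (Fin m) (Fin p) ℝ)
    (B : Matrix (Fin n) (Fin p) ℝ) (x : Fin p → ℝ) :
    Matrix.of (Fin.append A B) *ᵥ x = Fin.append (A *ᵥ x) (B *ᵥ x) := by
  funext i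
  refine Fin.addCases (fun i => ?_) (fun i => ?_) i
  · rw [Fin.append_left]
    exact congrArg (· ⬝ᵥ x) (Fin.append_left A B i)
  · rw [Fin.append_right]
    exact congrArg (· ⬝ᵥ x) (Fin.append_right A B i)

namespace ResBlocks

variable {σ : ℝ → ℝ} {d0 : ℕ}

theorem comp_mem {Ds Es : List ℕ} {f g : (Fin d0 → ℝ) → Fin d0 → ℝ}
    (hf : f ∈ ResBlocks σ d0 Ds) (hg : g ∈ ResBlocks σ d0 Es) :
    g ∘ f ∈ ResBlocks σ d0 (Ds ++ Es) := by
  induction Ds generalizing f with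
  | nil =>
    rw [show f = id from hf]
    exact hg
  | cons D Ds ih =>
    obtain ⟨A, W, b, f', hf', rfl⟩ := hf
    exact ⟨A, W, b, g ∘ f', ih hf', rfl⟩

theorem update_add_mem (r : Fin d0) {D : ℕ} (s : Fin D → ℝ) (W : Matrix (Fin D) (Fin d0) ℝ)
    (b : Fin D → ℝ) :
    (fun z => update z r (z r + ∑ k, s k * σ (W k ⬝ᵥ z + b k))) ∈ ResBlocks σ d0 [D] := by
  refine ⟨Matrix.of fun j => if j = r then s else 0, W, b, id, rfl, ?_⟩
  funext z j
  by_cases hj : j = r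
  · subst hj
    simp only [update_self, mulVec, id_eq, Pi.add_apply, of_apply, ↓reduceIte, add_right_inj]
    rfl
  · simp [hj, mulVec]

theorem relu_update_mem (G : ℝ → ℝ → ℝ) (p q : ℝ)
    (hG : ∀ a b, G a b = a + (p * max (b - a) 0 + q * max (a - b) 0))
    (r : Fin d0) (v : Fin d0 → ℝ) (c : ℝ) :
    (fun z => update z r (G (z r) (v ⬝ᵥ z + c))) ∈ ResBlocks relu d0 [2] := by
  convert update_add_mem r ![p, q] ![v - Pi.single r 1, Pi.single r 1 - v] ![c, -c]
    using 3 with z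
  rw [hG]
  simp only [Fin.sum_univ_two, cons_val_zero, cons_val_one, cons_val_fin_one, sub_dotProduct,
    single_dotProduct, one_mul, add_right_inj]
  ring_nf

end ResBlocks

def ResChain (σ : ℝ → ℝ) (d0 D : ℕ) : Set ((Fin d0 → ℝ) → Fin d0 → ℝ) :=
  {T | ∃ n, T ∈ ResBlocks σ d0 (List.replicate n D)}

namespace ResChain

variable {σ : ℝ → ℝ} {d0 D : ℕ}

theorem of_mem_resBlocks {T : (Fin d0 → ℝ) → Fin d0 → ℝ} (hT : T ∈ ResBlocks σ d0 [D]) :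
    T ∈ ResChain σ d0 D :=
  ⟨1, hT⟩

theorem comp_mem {S T : (Fin d0 → ℝ) → Fin d0 → ℝ} (hS : S ∈ ResChain σ d0 D)
    (hT : T ∈ ResChain σ d0 D) : T ∘ S ∈ ResChain σ d0 D := by
  obtain ⟨m, hS⟩ := hS
  obtain ⟨n, hT⟩ := hT
  exact ⟨m + n, List.replicate_add m n D ▸ ResBlocks.comp_mem hS hT⟩

end ResChain

def affineFunctions (d : ℕ) : Set ((Fin d → ℝ) → ℝ) :=
  {φ | ∃ (w : Fin d → ℝ) (c : ℝ), φ = fun x => w ⬝ᵥ x + c}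

variable {d : ℕ}

theorem continuous_of_mem_affineFunctions {φ : (Fin d → ℝ) → ℝ} (hφ : φ ∈ affineFunctions d) :
    Continuous φ := by
  obtain ⟨w, c, rfl⟩ := hφ
  fun_prop

theorem exists_mem_affineFunctions_eq_eq (x y : Fin d → ℝ) (a b : ℝ) (h : x = y → a = b) :
    ∃ φ ∈ affineFunctions d, φ x = a ∧ φ y = b := by
  by_cases hxy : x = y
  · exact ⟨fun _ => a, ⟨0, a, by simp⟩, rfl, h hxy⟩
  obtain ⟨k, hk⟩ : ∃ k, x k ≠ y k := Function.ne_iff.mp hxy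
  set s := (b - a) / (y k - x k)
  have hs : s * (y k - x k) = b - a := div_mul_cancel₀ _ (sub_ne_zero.2 hk.symm)
  refine ⟨fun z => Pi.single k s ⬝ᵥ z + (a - s * x k), ⟨_, _, rfl⟩, ?_, ?_⟩ <;>
    simp only [single_dotProduct] <;> linarith

theorem exists_mem_latticeClosure_affineFunctions_abs_sub_lt {K : Set (Fin d → ℝ)}
    (hK : IsCompact K) {f : (Fin d → ℝ) → ℝ} (hf : ContinuousOn f K) {ε : ℝ} (hε : 0 < ε) :
    ∃ φ ∈ latticeClosure (affineFunctions d), ∀ x ∈ K, |f x - φ x| < ε := by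
  have : CompactSpace K := isCompact_iff_compactSpace.mp hK
  let S : Set C(K, ℝ) := {F | ∃ φ ∈ latticeClosure (affineFunctions d), ∀ x : K, F x = φ x}
  have hlat : IsSublattice (latticeClosure (affineFunctions d)) := isSublattice_latticeClosure
  have hS : closure S = ⊤ := by
    refine ContinuousMap.sublattice_closure_eq_top S ?_ ?_ ?_ ?_
    · exact ⟨0, fun _ => 0, subset_latticeClosure ⟨0, 0, by simp⟩, fun _ => rfl⟩
    · rintro F ⟨φ, hφ, hF⟩ G ⟨ψ, hψ, hG⟩
      exact ⟨φ ⊓ ψ, hlat.infClosed hφ hψ, fun x => by simp [hF, hG]⟩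
    · rintro F ⟨φ, hφ, hF⟩ G ⟨ψ, hψ, hG⟩
      exact ⟨φ ⊔ ψ, hlat.supClosed hφ hψ, fun x => by simp [hF, hG]⟩
    · intro v x y
      obtain ⟨φ, hφ, hx, hy⟩ :=
        exists_mem_affineFunctions_eq_eq x.1 y.1 (v x) (v y) fun h => congrArg v (Subtype.ext h)
      exact ⟨⟨fun z => φ z, (continuous_of_mem_affineFunctions hφ).comp continuous_subtype_val⟩,
        ⟨φ, subset_latticeClosure hφ, fun _ => rfl⟩, hx, hy⟩
  have hfK : (⟨K.domRestrict f, continuousOn_iff_continuous_domRestrict.mp hf⟩ : C(K, ℝ)) ∈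
      closure S :=
    hS ▸ Set.mem_univ _
  obtain ⟨G, ⟨φ, hφ, hG⟩, hfG⟩ := Metric.mem_closure_iff.mp hfK ε hε
  refine ⟨φ, hφ, fun x hx => ?_⟩
  rw [← hG ⟨x, hx⟩]
  exact (ContinuousMap.dist_apply_le_dist ⟨x, hx⟩).trans_lt hfG

theorem exists_resChain_register_update (G : ℝ → ℝ → ℝ) (p q : ℝ)
    (hG : ∀ a b, G a b = a + (p * max (b - a) 0 + q * max (a - b) 0))
    (k : Fin 2) (w : Fin d → ℝ) (e : Fin 2 → ℝ) (c : ℝ) :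
    ∃ T ∈ ResChain relu (d + 2) 2, ∀ x y,
      T (Fin.append x y) = Fin.append x (update y k (G (y k) (w ⬝ᵥ x + e ⬝ᵥ y + c))) :=
  ⟨_, .of_mem_resBlocks (ResBlocks.relu_update_mem G p q hG (Fin.natAdd d k) (Fin.append w e) c),
    fun x y => by
      simp only [Fin.append_right, Fin.append_dotProduct_append, Fin.update_append_natAdd]⟩

theorem exists_resChain_register_assign (k : Fin 2) (w : Fin d → ℝ) (e : Fin 2 → ℝ) (c : ℝ) :
    ∃ T ∈ ResChain relu (d + 2) 2, ∀ x y,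
      T (Fin.append x y) = Fin.append x (update y k (w ⬝ᵥ x + e ⬝ᵥ y + c)) :=
  exists_resChain_register_update (fun _ b => b) 1 (-1) (fun a b => by
    have := max_zero_sub_max_neg_zero_eq_self (b - a)
    rw [neg_sub] at this
    linarith) k w e c

theorem exists_resChain_register_min (k : Fin 2) (w : Fin d → ℝ) (e : Fin 2 → ℝ) (c : ℝ) :
    ∃ T ∈ ResChain relu (d + 2) 2, ∀ x y,
      T (Fin.append x y) = Fin.append x (update y k (min (y k) (w ⬝ᵥ x + e ⬝ᵥ y + c))) :=
  exists_resChain_register_update min 0 (-1) (fun a b => by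
    rcases le_total a b with h | h <;> simp [h]) k w e c

theorem exists_resChain_register_max (k : Fin 2) (w : Fin d → ℝ) (e : Fin 2 → ℝ) (c : ℝ) :
    ∃ T ∈ ResChain relu (d + 2) 2, ∀ x y,
      T (Fin.append x y) = Fin.append x (update y k (max (y k) (w ⬝ᵥ x + e ⬝ᵥ y + c))) :=
  exists_resChain_register_update max 1 0 (fun a b => by
    rcases le_total a b with h | h <;> simp [h]) k w e c

theorem exists_resChain_of_mem_infClosure {φ : (Fin d → ℝ) → ℝ}
    (hφ : φ ∈ infClosure (affineFunctions d)) :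
    ∃ T ∈ ResChain relu (d + 2) 2, ∀ x y,
      T (Fin.append x y) = Fin.append x (update y 0 (φ x)) := by
  refine infClosure_induction (fun φ hφ => ?_) (fun φ hφ ψ hψ => ?_) hφ
  · obtain ⟨w, c, rfl⟩ := hφ
    obtain ⟨T, hT, hTx⟩ := exists_resChain_register_assign 0 w 0 c
    exact ⟨T, hT, fun x y => by simp [hTx]⟩
  · obtain ⟨S, hS, hSx⟩ := hψ
    obtain ⟨w, c, rfl⟩ := hφ
    obtain ⟨T, hT, hTx⟩ := exists_resChain_register_min 0 w 0 c
    exact ⟨T ∘ S, ResChain.comp_mem hS hT, fun x y => by simp [hSx, hTx, min_comm]⟩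

theorem exists_resChain_of_mem_supClosure_infClosure {φ : (Fin d → ℝ) → ℝ}
    (hφ : φ ∈ supClosure (infClosure (affineFunctions d))) :
    ∃ T ∈ ResChain relu (d + 2) 2, ∀ x y,
      ∃ y', T (Fin.append x y) = Fin.append x y' ∧ y' 1 = φ x := by
  refine supClosure_induction (fun φ hφ => ?_) (fun φ hφ ψ hψ => ?_) hφ
  · obtain ⟨S, hS, hSx⟩ := exists_resChain_of_mem_infClosure hφ
    obtain ⟨T, hT, hTx⟩ := exists_resChain_register_assign 1 0 (Pi.single 0 1) 0
    refine ⟨T ∘ S, ResChain.comp_mem hS hT, fun x y =>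
      ⟨update (update y 0 (φ x)) 1 (φ x), by simp [hSx, hTx], by simp⟩⟩
  · obtain ⟨R, hR, hRx⟩ := hψ
    obtain ⟨S, hS, hSx⟩ := exists_resChain_of_mem_infClosure hφ
    obtain ⟨T, hT, hTx⟩ := exists_resChain_register_max 1 0 (Pi.single 0 1) 0
    refine ⟨T ∘ S ∘ R, ResChain.comp_mem (ResChain.comp_mem hR hS) hT, fun x y => ?_⟩
    obtain ⟨y', hy', hy'ψ⟩ := hRx x y
    refine ⟨update (update y' 0 (φ x)) 1 (max (y' 1) (φ x)), by simp [hy', hSx, hTx], ?_⟩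
    simp [hy'ψ, max_comm]

theorem ResChain.exists_mem_resNet {σ : ℝ → ℝ} {D : ℕ} {φ : (Fin d → ℝ) → ℝ}
    {T : (Fin (d + 2) → ℝ) → Fin (d + 2) → ℝ} (hT : T ∈ ResChain σ (d + 2) D)
    (hTφ : ∀ x, ∃ y', T (Fin.append x 0) = Fin.append x y' ∧ y' 1 = φ x) :
    ∃ L, φ ∈ ResNet σ d (d + 2) (List.replicate (L - 1) D) := by
  obtain ⟨n, hn⟩ := hT
  refine ⟨n + 1,
    Matrix.of (Fin.append (1 : Matrix (Fin d) (Fin d) ℝ) (0 : Matrix (Fin 2) (Fin d) ℝ)), 0,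
    Pi.single (Fin.natAdd d 1) 1, T, by simpa using hn, funext fun x => ?_⟩
  obtain ⟨y', hy', hy'φ⟩ := hTφ x
  change φ x = Pi.single (Fin.natAdd d 1) 1 ⬝ᵥ T (_ + 0)
  rw [add_zero, Matrix.of_append_mulVec, one_mulVec, zero_mulVec, hy', single_one_dotProduct,
    Fin.append_right, hy'φ]

theorem exists_resNet_of_mem_latticeClosure {φ : (Fin d → ℝ) → ℝ}
    (hφ : φ ∈ latticeClosure (affineFunctions d)) :
    ∃ L, φ ∈ ResNet relu d (d + 2) (List.replicate (L - 1) 2) := by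
  rw [← supClosure_infClosure] at hφ
  obtain ⟨T, hT, hTφ⟩ := exists_resChain_of_mem_supClosure_infClosure hφ
  exact ResChain.exists_mem_resNet hT fun x => hTφ x 0

theorem relu_resNet_universal_approximation_general (d : ℕ)
    (K : Set (Fin d → ℝ)) (hK : IsCompact K)
    (f : (Fin d → ℝ) → ℝ) (hf : ContinuousOn f K) (ε : ℝ) (hε : 0 < ε) :
    ∃ (L : ℕ) (g : (Fin d → ℝ) → ℝ),
      g ∈ ResNet (fun x => max x 0) d (d + 2) (List.replicate (L - 1) 2) ∧
      ∀ x ∈ K, |f x - g x| ≤ ε := by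
  obtain ⟨φ, hφ, hfφ⟩ := exists_mem_latticeClosure_affineFunctions_abs_sub_lt hK hf hε
  obtain ⟨L, hL⟩ := exists_resNet_of_mem_latticeClosure hφ
  exact ⟨L, φ, hL, fun x hx => (hfφ x hx).le⟩

/-- Universal approximation by deep residual ReLU networks of internal width `d + 2` with all
residual blocks of width `2`: every continuous function on a compact `K ⊆ ℝ^d` can be uniformly
approximated to accuracy `ε` by some `g ∈ R_{L,ReLU}(d+2, 2, …, 2)` for some depth `L`. -/
theorem relu_resNet_universal_approximation (d : ℕ) (hd : 1 ≤ d)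
    (K : Set (Fin d → ℝ)) (hK : IsCompact K)
    (f : (Fin d → ℝ) → ℝ) (hf : ContinuousOn f K) (ε : ℝ) (hε : 0 < ε) :
    ∃ (L : ℕ) (g : (Fin d → ℝ) → ℝ),
      g ∈ ResNet (fun x => max x 0) d (d + 2) (List.replicate (L - 1) 2) ∧
      ∀ x ∈ K, |f x - g x| ≤ ε :=
  relu_resNet_universal_approximation_general d K hK f hf ε hε
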